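/- arXiv:2602.16340 — 4 statements merged into one kernel-verified Lean document; each statement's English description precedes it below -/
import Mathlib

section
/- Let g : [0,∞) → ℝ be locally essentially bounded and measurable, and let c₁ > c₂/2 > 0. Then for all t ≥ 0, |∫₀ᵗ c₁ e^{-c₁(t-s)} g(s) ds| ≤ ∫₀ᵗ c₁ e^{-c₁(t-s)} |g(s)| ds ≤ (c₁/√(c₂(2c₁ - c₂))) · √(∫₀ᵗ c₂ e^{-c₂(t-s)} g(s)² ds). -/
open MeasureTheory Filter

/-- Local essential boundedness on `[0, b]` for every `b`. -/
def LocEssBdd (g : ℝ → ℝ) : Prop :=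
  ∀ b : ℝ, ∃ C : ℝ, ∀ᵐ t ∂(volume : Measure ℝ), t ∈ Set.Icc (0:ℝ) b → |g t| ≤ C

lemma exp_int_aux {k t : ℝ} (hk : 0 < k) (ht : 0 ≤ t) :
    ∫ s in (0:ℝ)..t, Real.exp (-k * (t - s)) ≤ 1 / k := by
  have h1 : (∫ s in (0:ℝ)..t, Real.exp (-k * (t - s)))
      = ∫ u in (t - t)..(t - 0), Real.exp (-k * u) :=
    intervalIntegral.integral_comp_sub_left (fun u => Real.exp (-k * u)) t
  have h2 : (∫ u in (t - t)..(t - 0), Real.exp (-k * u))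
      = (-k)⁻¹ • ∫ x in (-k * (t - t))..(-k * (t - 0)), Real.exp x :=
    intervalIntegral.integral_comp_mul_left Real.exp (neg_ne_zero.mpr hk.ne')
  rw [h1, h2, integral_exp]
  simp only [sub_self, sub_zero, mul_zero, Real.exp_zero, smul_eq_mul]
  have hle : Real.exp (-k * t) ≤ 1 := Real.exp_le_one_iff.mpr (by nlinarith)
  have hpos : 0 < Real.exp (-k * t) := Real.exp_pos _
  rw [inv_neg, one_div]
  have h3 : (1 - Real.exp (-k * t)) ≤ 1 := by linarith
  calc -k⁻¹ * (Real.exp (-k * t) - 1) = k⁻¹ * (1 - Real.exp (-k * t)) := by ring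
    _ ≤ k⁻¹ * 1 := mul_le_mul_of_nonneg_left h3 (by positivity)
    _ = k⁻¹ := mul_one _

/-- Uniform bound on the Adam ratio. -/
theorem stmt1 (g : ℝ → ℝ) (hgm : Measurable g) (hgb : LocEssBdd g)
    (c₁ c₂ : ℝ) (hc₂ : 0 < c₂) (hc₁ : c₂ / 2 < c₁) (t : ℝ) (ht : 0 ≤ t) :
    |∫ s in (0:ℝ)..t, c₁ * Real.exp (-c₁ * (t - s)) * g s|
        ≤ ∫ s in (0:ℝ)..t, c₁ * Real.exp (-c₁ * (t - s)) * |g s| ∧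
    ∫ s in (0:ℝ)..t, c₁ * Real.exp (-c₁ * (t - s)) * |g s|
        ≤ (c₁ / Real.sqrt (c₂ * (2 * c₁ - c₂))) *
            Real.sqrt (∫ s in (0:ℝ)..t, c₂ * Real.exp (-c₂ * (t - s)) * (g s) ^ 2) := by
  have hc₁pos : 0 < c₁ := lt_trans (by positivity) hc₁
  have hkpos : 0 < 2 * c₁ - c₂ := by linarith
  -- essential bound
  obtain ⟨C₀, hC₀⟩ := hgb t
  set C : ℝ := max C₀ 0 with hC
  have hCnn : 0 ≤ C := le_max_right _ _
  have hgC : ∀ᵐ s ∂(volume : Measure ℝ), s ∈ Set.Icc (0:ℝ) t → |g s| ≤ C := by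
    filter_upwards [hC₀] with s hs hmem
    exact le_trans (hs hmem) (le_max_left _ _)
  set μ : Measure ℝ := volume.restrict (Set.Ioc 0 t) with hμ
  have hgCμ : ∀ᵐ s ∂μ, |g s| ≤ C := by
    filter_upwards [ae_restrict_of_ae hgC, ae_restrict_mem measurableSet_Ioc] with s h1 h2
    exact h1 ⟨le_of_lt h2.1, h2.2⟩
  have hmemμ : ∀ᵐ s ∂μ, s ∈ Set.Ioc (0:ℝ) t := ae_restrict_mem measurableSet_Ioc
  constructor
  · -- first inequality
    have h := intervalIntegral.abs_integral_le_integral_abs (μ := volume)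
      (f := fun s => c₁ * Real.exp (-c₁ * (t - s)) * g s) (a := 0) (b := t) ht
    refine le_trans h (le_of_eq ?_)
    apply intervalIntegral.integral_congr
    intro s _
    simp [abs_mul, abs_of_pos hc₁pos, abs_of_pos (Real.exp_pos _)]
  · -- second inequality: Cauchy-Schwarz
    set f₁ : ℝ → ℝ := fun s => c₁ * Real.exp (-(c₁ - c₂ / 2) * (t - s)) with hf₁
    set f₂ : ℝ → ℝ := fun s => Real.exp (-(c₂ / 2) * (t - s)) * |g s| with hf₂
    have hprod : ∀ s, c₁ * Real.exp (-c₁ * (t - s)) * |g s| = f₁ s * f₂ s := by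
      intro s
      have he : Real.exp (-(c₁ - c₂ / 2) * (t - s)) * Real.exp (-(c₂ / 2) * (t - s))
          = Real.exp (-c₁ * (t - s)) := by
        rw [← Real.exp_add]; congr 1; ring
      simp only [hf₁, hf₂]
      rw [← he]; ring
    -- measurability / MemLp
    have hf₁m : AEStronglyMeasurable f₁ μ :=
      (Continuous.aestronglyMeasurable (by continuity))
    have hf₂m : AEStronglyMeasurable f₂ μ := by
      apply Measurable.aestronglyMeasurable
      exact ((Real.measurable_exp.comp (measurable_const.mul
        (measurable_const.sub measurable_id))).mul hgm.abs)
    have hf₁L : MemLp f₁ (ENNReal.ofReal 2) μ := by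
      refine MemLp.of_bound hf₁m c₁ ?_
      filter_upwards [hmemμ] with s hs
      have hts : 0 ≤ t - s := by linarith [hs.2]
      have h1 : Real.exp (-(c₁ - c₂ / 2) * (t - s)) ≤ 1 :=
        Real.exp_le_one_iff.mpr (by nlinarith)
      have h0 : 0 < Real.exp (-(c₁ - c₂ / 2) * (t - s)) := Real.exp_pos _
      simp only [hf₁, Real.norm_eq_abs]
      rw [abs_of_pos (by positivity)]
      nlinarith
    have hf₂L : MemLp f₂ (ENNReal.ofReal 2) μ := by
      refine MemLp.of_bound hf₂m C ?_
      filter_upwards [hmemμ, hgCμ] with s hs hg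
      have hts : 0 ≤ t - s := by linarith [hs.2]
      have he : Real.exp (-(c₂ / 2) * (t - s)) ≤ 1 :=
        Real.exp_le_one_iff.mpr (by nlinarith)
      have h0 : 0 < Real.exp (-(c₂ / 2) * (t - s)) := Real.exp_pos _
      simp only [hf₂, Real.norm_eq_abs]
      rw [abs_of_nonneg (by positivity)]
      nlinarith [abs_nonneg (g s)]
    have hpq : Real.HolderConjugate 2 2 := by constructor <;> norm_num
    have hCS := MeasureTheory.integral_mul_le_Lp_mul_Lq_of_nonneg hpq
      (f := f₁) (g := f₂) (μ := μ)
      (Eventually.of_forall fun s => by positivity)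
      (Eventually.of_forall fun s => by positivity) hf₁L hf₂L
    have hconv : ∀ x : ℝ, x ^ (2:ℝ) = x ^ (2:ℕ) := fun x => by
      rw [show (2:ℝ) = ((2:ℕ):ℝ) by norm_num, Real.rpow_natCast]
    simp only [hconv] at hCS
    -- rewrite LHS
    have hLHS : (∫ s in (0:ℝ)..t, c₁ * Real.exp (-c₁ * (t - s)) * |g s|)
        = ∫ s, f₁ s * f₂ s ∂μ := by
      rw [intervalIntegral.integral_of_le ht]
      exact setIntegral_congr_fun measurableSet_Ioc (fun s _ => hprod s)
    -- bound ∫ f₁ ^ 2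
    have hf₁sq : (∫ s, f₁ s ^ (2:ℕ) ∂μ) ≤ c₁ ^ 2 / (2 * c₁ - c₂) := by
      have heq : (∫ s, f₁ s ^ (2:ℕ) ∂μ)
          = ∫ s in (0:ℝ)..t, c₁ ^ 2 * Real.exp (-(2 * c₁ - c₂) * (t - s)) := by
        rw [intervalIntegral.integral_of_le ht]
        apply setIntegral_congr_fun measurableSet_Ioc
        intro s _
        dsimp only [hf₁]
        rw [mul_pow, ← Real.exp_nat_mul]
        congr 2
        push_cast; ring
      rw [heq, intervalIntegral.integral_const_mul]
      have h5 := exp_int_aux hkpos ht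
      calc c₁ ^ 2 * ∫ s in (0:ℝ)..t, Real.exp (-(2 * c₁ - c₂) * (t - s))
          ≤ c₁ ^ 2 * (1 / (2 * c₁ - c₂)) := mul_le_mul_of_nonneg_left h5 (by positivity)
        _ = c₁ ^ 2 / (2 * c₁ - c₂) := by ring
    -- identify ∫ f₂ ^ 2
    set X : ℝ := ∫ s in (0:ℝ)..t, c₂ * Real.exp (-c₂ * (t - s)) * (g s) ^ 2 with hX
    have hXnn : 0 ≤ X := by
      apply intervalIntegral.integral_nonneg ht
      intro s _
      positivity
    have hf₂sq : (∫ s, f₂ s ^ (2:ℕ) ∂μ) = X / c₂ := by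
      have h1 : (∫ s, f₂ s ^ (2:ℕ) ∂μ)
          = ∫ s in (0:ℝ)..t, (1 / c₂) * (c₂ * Real.exp (-c₂ * (t - s)) * (g s) ^ 2) := by
        rw [intervalIntegral.integral_of_le ht]
        apply setIntegral_congr_fun measurableSet_Ioc
        intro s _
        dsimp only [hf₂]
        rw [mul_pow, ← Real.exp_nat_mul, sq_abs]
        rw [show ((2:ℕ):ℝ) * (-(c₂ / 2) * (t - s)) = -c₂ * (t - s) by push_cast; ring]
        field_simp
      rw [h1, intervalIntegral.integral_const_mul, ← hX]
      ring
    have hf₁sqnn : 0 ≤ ∫ s, f₁ s ^ (2:ℕ) ∂μ := by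
      apply integral_nonneg
      intro s
      positivity
    -- combine
    rw [hLHS]
    refine le_trans hCS ?_
    rw [hf₂sq]
    have h2 : ((∫ s, f₁ s ^ (2:ℕ) ∂μ) : ℝ) ^ ((1:ℝ)/2)
        ≤ (c₁ ^ 2 / (2 * c₁ - c₂)) ^ ((1:ℝ)/2) :=
      Real.rpow_le_rpow hf₁sqnn hf₁sq (by norm_num)
    have h3 : (X / c₂ : ℝ) ^ ((1:ℝ)/2) = Real.sqrt X / Real.sqrt c₂ := by
      rw [← Real.sqrt_eq_rpow, Real.sqrt_div hXnn]
    have h4 : ((c₁ ^ 2 / (2 * c₁ - c₂) : ℝ)) ^ ((1:ℝ)/2)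
        = c₁ / Real.sqrt (2 * c₁ - c₂) := by
      rw [← Real.sqrt_eq_rpow, Real.sqrt_div (sq_nonneg c₁), Real.sqrt_sq hc₁pos.le]
    have hsc₂ : 0 < Real.sqrt c₂ := Real.sqrt_pos.mpr hc₂
    have hsk : 0 < Real.sqrt (2 * c₁ - c₂) := Real.sqrt_pos.mpr hkpos
    calc (∫ s, f₁ s ^ (2:ℕ) ∂μ) ^ ((1:ℝ)/2) * (X / c₂) ^ ((1:ℝ)/2)
        ≤ (c₁ ^ 2 / (2 * c₁ - c₂)) ^ ((1:ℝ)/2) * (X / c₂) ^ ((1:ℝ)/2) := by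
          apply mul_le_mul_of_nonneg_right h2
          positivity
      _ = (c₁ / Real.sqrt (2 * c₁ - c₂)) * (Real.sqrt X / Real.sqrt c₂) := by rw [h3, h4]
      _ = (c₁ / Real.sqrt (c₂ * (2 * c₁ - c₂))) * Real.sqrt X := by
          rw [Real.sqrt_mul hc₂.le, div_mul_div_comm, div_mul_eq_mul_div,
            mul_comm (Real.sqrt (2 * c₁ - c₂))]
end

section
/- Let g : [0,∞) → ℝ be measurable, nonnegative, locally essentially bounded, not almost everywhere zero, and let c > 0. If ∫₀^∞ e^{cs} g(s) ds = ∞, then for any t₀ ≥ 0, the ratio (∫_{t₀}^t c e^{-c(t-s)} g(s) ds) / (∫₀^t c e^{-c(t-s)} g(s) ds) tends to 1 as t → ∞. -/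
open MeasureTheory Filter

/-- under divergence of `∫₀^∞ e^{cs} g(s) ds`, the tail EMA over `[t₀, t]`
asymptotically dominates the full EMA. -/
theorem stmt2 (g : ℝ → ℝ) (hgm : Measurable g) (hgb : LocEssBdd g)
    (hgnn : ∀ t, 0 ≤ t → 0 ≤ g t)
    (hgnz : ¬ (∀ᵐ t ∂(volume : Measure ℝ), 0 ≤ t → g t = 0))
    (c : ℝ) (hc : 0 < c)
    (hdiv : Tendsto (fun t => ∫ s in (0:ℝ)..t, Real.exp (c * s) * g s) atTop atTop)
    (t₀ : ℝ) (ht₀ : 0 ≤ t₀) :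
    Tendsto (fun t =>
        (∫ s in t₀..t, c * Real.exp (-c * (t - s)) * g s) /
        (∫ s in (0:ℝ)..t, c * Real.exp (-c * (t - s)) * g s)) atTop (nhds 1) := by
  set f : ℝ → ℝ := fun s => Real.exp (c * s) * g s with hf
  have hfm : Measurable f := (Real.measurable_exp.comp (measurable_const_mul c)).mul hgm
  have hint : ∀ a b : ℝ, 0 ≤ a → 0 ≤ b → IntervalIntegrable f volume a b := by
    intro a b ha hb
    set b' := max a b with hb'
    obtain ⟨C, hC⟩ := hgb b'
    have hIcc : IntegrableOn f (Set.Icc 0 b') volume := by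
      refine Integrable.mono' (g := fun _ => Real.exp (c * b') * max C 0)
        (integrable_const _) hfm.aestronglyMeasurable.restrict ?_
      have h := ae_restrict_of_ae (μ := volume) (s := Set.Icc 0 b') hC
      filter_upwards [h, ae_restrict_mem measurableSet_Icc] with s hs hmem
      have h1 : |g s| ≤ C := hs hmem
      have h2 : Real.exp (c * s) ≤ Real.exp (c * b') :=
        Real.exp_le_exp.2 (mul_le_mul_of_nonneg_left hmem.2 hc.le)
      calc ‖f s‖ = Real.exp (c * s) * |g s| := by
            simp [hf, abs_mul, abs_of_pos (Real.exp_pos _)]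
        _ ≤ Real.exp (c * b') * max C 0 :=
            mul_le_mul h2 (h1.trans (le_max_left _ _)) (abs_nonneg _) (Real.exp_pos _).le
    have hsub : Set.uIcc a b ⊆ Set.Icc 0 b' := by
      rw [Set.uIcc]
      exact Set.Icc_subset_Icc (le_inf ha hb) le_rfl
    exact (hIcc.mono_set hsub).intervalIntegrable
  set F : ℝ → ℝ := fun t => ∫ s in (0:ℝ)..t, f s with hF
  have hdivF : Tendsto F atTop atTop := hdiv
  have hrw : ∀ a t : ℝ, (∫ s in a..t, c * Real.exp (-c * (t - s)) * g s)
      = c * Real.exp (-(c * t)) * ∫ s in a..t, f s := by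
    intro a t
    rw [← intervalIntegral.integral_const_mul]
    apply intervalIntegral.integral_congr
    intro s _
    simp only [hf]
    rw [show -c * (t - s) = -(c * t) + c * s by ring, Real.exp_add]
    ring
  have hlim : Tendsto (fun t => 1 - F t₀ / F t) atTop (nhds 1) := by
    have h0 : Tendsto (fun t => F t₀ / F t) atTop (nhds 0) :=
      Tendsto.div_atTop tendsto_const_nhds hdivF
    simpa using (tendsto_const_nhds (x := (1:ℝ)) (f := atTop)).sub h0
  refine hlim.congr' ?_
  filter_upwards [hdivF.eventually_gt_atTop 0, eventually_ge_atTop t₀,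
    eventually_ge_atTop (0:ℝ)] with t hFt htt₀ ht0
  have hsplit : (∫ s in t₀..t, f s) = F t - F t₀ :=
    (intervalIntegral.integral_interval_sub_left (hint 0 t le_rfl ht0)
      (hint 0 t₀ le_rfl ht₀)).symm
  have hne : c * Real.exp (-(c * t)) ≠ 0 := by positivity
  rw [hrw, hrw, hsplit, mul_div_mul_left _ _ hne, sub_div, div_self hFt.ne']
end

section
/- Let g, F : [0,∞) → ℝ be measurable and locally essentially bounded with g nonnegative, not almost everywhere zero, ∫₀^∞ e^{cs} g(s) ds = ∞ for a given c > 0, and g(t) > 0 for all sufficiently large t. If F(t)/g(t) → C ∈ ℝ as t → ∞, then A(F,c)(t)/A(g,c)(t) → C as t → ∞, where A(h,c)(t) = ∫₀ᵗ c e^{-c(t-s)} h(s) ds. -/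
open MeasureTheory Filter

/-- The momentum (EMA) `A(h,c)(t) = ∫₀ᵗ c e^{-c(t-s)} h(s) ds`. -/
noncomputable def ema (c : ℝ) (h : ℝ → ℝ) (t : ℝ) : ℝ :=
  ∫ s in (0:ℝ)..t, c * Real.exp (-c * (t - s)) * h s

lemma expMul_intervalIntegrable (c : ℝ) (h : ℝ → ℝ) (hm : Measurable h)
    (hbdd : LocEssBdd h) {a b : ℝ} (ha : 0 ≤ a) (hb : 0 ≤ b) :
    IntervalIntegrable (fun s => Real.exp (c * s) * h s) volume a b := by
  set M := max a b with hM
  obtain ⟨K, hK⟩ := hbdd M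
  rw [intervalIntegrable_iff]
  have hsub : Set.uIoc a b ⊆ Set.Icc 0 M := by
    intro x hx
    exact ⟨(le_min ha hb).trans hx.1.le, hx.2⟩
  have hInt : IntegrableOn (fun s => Real.exp (c * s) * h s) (Set.Icc 0 M) := by
    refine Integrable.mono' (g := fun _ => Real.exp (|c| * M) * |K|)
      (integrable_const _)
      (((measurable_const.mul measurable_id).exp.mul hm).aestronglyMeasurable) ?_
    filter_upwards [ae_restrict_of_ae hK, ae_restrict_mem measurableSet_Icc] with x hx hmem
    have hx' := hx hmem
    have h1 : Real.exp (c * x) ≤ Real.exp (|c| * M) := by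
      apply Real.exp_le_exp.mpr
      calc c * x ≤ |c| * x := mul_le_mul_of_nonneg_right (le_abs_self c) hmem.1
        _ ≤ |c| * M := mul_le_mul_of_nonneg_left hmem.2 (abs_nonneg c)
    calc ‖Real.exp (c * x) * h x‖ = Real.exp (c * x) * |h x| := by
          rw [norm_mul, Real.norm_eq_abs, Real.norm_eq_abs, abs_of_pos (Real.exp_pos _)]
      _ ≤ Real.exp (|c| * M) * |K| :=
          mul_le_mul h1 (hx'.trans (le_abs_self K)) (abs_nonneg _) (Real.exp_pos _).le
  exact hInt.mono_set hsub

lemma ema_eq (c : ℝ) (h : ℝ → ℝ) (t : ℝ) :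
    ema c h t = (c * Real.exp (-c * t)) * ∫ s in (0:ℝ)..t, Real.exp (c * s) * h s := by
  rw [ema, ← intervalIntegral.integral_const_mul]
  apply intervalIntegral.integral_congr
  intro s _
  dsimp only
  rw [show -c * (t - s) = -c * t + c * s by ring, Real.exp_add]
  ring

/-- if `F/g → C`, then `A(F,c)/A(g,c) → C`. -/
theorem stmt3 (g F : ℝ → ℝ) (hgm : Measurable g) (hFm : Measurable F)
    (hgb : LocEssBdd g) (hFb : LocEssBdd F)
    (hgnn : ∀ t, 0 ≤ t → 0 ≤ g t)
    (hgnz : ¬ (∀ᵐ t ∂(volume : Measure ℝ), 0 ≤ t → g t = 0))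
    (c : ℝ) (hc : 0 < c)
    (hdiv : Tendsto (fun t => ∫ s in (0:ℝ)..t, Real.exp (c * s) * g s) atTop atTop)
    (hgpos : ∀ᶠ t in atTop, 0 < g t)
    (C : ℝ) (hratio : Tendsto (fun t => F t / g t) atTop (nhds C)) :
    Tendsto (fun t => ema c F t / ema c g t) atTop (nhds C) := by
  set G : ℝ → ℝ := fun t => ∫ s in (0:ℝ)..t, Real.exp (c * s) * g s with hGdef
  set Φ : ℝ → ℝ := fun t => ∫ s in (0:ℝ)..t, Real.exp (c * s) * F s with hΦdef
  have hEq : ∀ t, ema c F t / ema c g t = Φ t / G t := by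
    intro t
    rw [ema_eq, ema_eq, mul_div_mul_left _ _ (ne_of_gt (mul_pos hc (Real.exp_pos _)))]
  have main : Tendsto (fun t => Φ t / G t) atTop (nhds C) := by
    rw [Metric.tendsto_atTop]
    intro ε hε
    have hhalf : 0 < ε / 2 := by linarith
    have h1 : ∀ᶠ s in atTop, |F s / g s - C| < ε / 2 := by
      have := hratio (Metric.ball_mem_nhds C hhalf)
      simpa [Real.dist_eq] using this
    obtain ⟨T₀, hT₀⟩ := eventually_atTop.1 (h1.and hgpos)
    set T := max T₀ 0 with hTdef
    have hT0 : (0:ℝ) ≤ T := le_max_right _ _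
    have key : ∀ s, T ≤ s → |F s - C * g s| ≤ ε / 2 * g s := by
      intro s hs
      obtain ⟨hball, hpos⟩ := hT₀ s ((le_max_left _ _).trans hs)
      have hne : g s ≠ 0 := ne_of_gt hpos
      have hrw : F s - C * g s = (F s / g s - C) * g s := by field_simp
      rw [hrw, abs_mul, abs_of_pos hpos]
      exact mul_le_mul_of_nonneg_right hball.le hpos.le
    have IIg : ∀ {a b : ℝ}, 0 ≤ a → 0 ≤ b →
        IntervalIntegrable (fun s => Real.exp (c * s) * g s) volume a b :=
      fun ha hb => expMul_intervalIntegrable c g hgm hgb ha hb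
    have IIF : ∀ {a b : ℝ}, 0 ≤ a → 0 ≤ b →
        IntervalIntegrable (fun s => Real.exp (c * s) * F s) volume a b :=
      fun ha hb => expMul_intervalIntegrable c F hFm hFb ha hb
    set K₀ := |Φ T - C * G T| with hK₀def
    have hK₀nn : 0 ≤ K₀ := abs_nonneg _
    have hGTnn : 0 ≤ G T :=
      intervalIntegral.integral_nonneg hT0
        (fun s hs => mul_nonneg (Real.exp_pos _).le (hgnn s hs.1))
    have est : ∀ t, T ≤ t → |Φ t - C * G t| ≤ K₀ + ε / 2 * G t := by
      intro t ht
      have ht0 : (0:ℝ) ≤ t := hT0.trans ht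
      have hΦs : Φ t = Φ T + ∫ s in T..t, Real.exp (c * s) * F s :=
        (intervalIntegral.integral_add_adjacent_intervals (IIF le_rfl hT0) (IIF hT0 ht0)).symm
      have hGs : G t = G T + ∫ s in T..t, Real.exp (c * s) * g s :=
        (intervalIntegral.integral_add_adjacent_intervals (IIg le_rfl hT0) (IIg hT0 ht0)).symm
      have hGseg : (0:ℝ) ≤ ∫ s in T..t, Real.exp (c * s) * g s :=
        intervalIntegral.integral_nonneg ht
          (fun s hs => mul_nonneg (Real.exp_pos _).le (hgnn s (hT0.trans hs.1)))
      have hsub : (∫ s in T..t, Real.exp (c * s) * (F s - C * g s))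
          = (∫ s in T..t, Real.exp (c * s) * F s)
            - C * ∫ s in T..t, Real.exp (c * s) * g s := by
        rw [← intervalIntegral.integral_const_mul,
          ← intervalIntegral.integral_sub (IIF hT0 ht0) ((IIg hT0 ht0).const_mul C)]
        apply intervalIntegral.integral_congr
        intro s _
        ring
      have hbd : |∫ s in T..t, Real.exp (c * s) * (F s - C * g s)|
          ≤ ε / 2 * ∫ s in T..t, Real.exp (c * s) * g s := by
        have hboundInt : IntervalIntegrable
            (fun s => ε / 2 * (Real.exp (c * s) * g s)) volume T t := (IIg hT0 ht0).const_mul _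
        have hae : ∀ᵐ s ∂(volume.restrict (Set.uIoc T t)),
            ‖Real.exp (c * s) * (F s - C * g s)‖ ≤ ε / 2 * (Real.exp (c * s) * g s) := by
          filter_upwards [ae_restrict_mem measurableSet_uIoc] with s hs
          rw [Set.uIoc_of_le ht] at hs
          have hkey := key s hs.1.le
          rw [norm_mul, Real.norm_eq_abs, Real.norm_eq_abs, abs_of_pos (Real.exp_pos _)]
          calc Real.exp (c * s) * |F s - C * g s|
              ≤ Real.exp (c * s) * (ε / 2 * g s) :=
                mul_le_mul_of_nonneg_left hkey (Real.exp_pos _).le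
            _ = ε / 2 * (Real.exp (c * s) * g s) := by ring
        have := intervalIntegral.norm_integral_le_abs_of_norm_le hae hboundInt
        rw [intervalIntegral.integral_const_mul] at this
        rw [Real.norm_eq_abs] at this
        refine this.trans ?_
        rw [abs_of_nonneg (mul_nonneg hhalf.le hGseg)]
      have hdecomp : Φ t - C * G t
          = (Φ T - C * G T) + ∫ s in T..t, Real.exp (c * s) * (F s - C * g s) := by
        rw [hsub, hΦs, hGs]; ring
      calc |Φ t - C * G t|
          ≤ |Φ T - C * G T| + |∫ s in T..t, Real.exp (c * s) * (F s - C * g s)| := by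
            rw [hdecomp]; exact abs_add_le _ _
        _ ≤ K₀ + ε / 2 * ∫ s in T..t, Real.exp (c * s) * g s := by
            rw [hK₀def]; exact add_le_add_right hbd _
        _ ≤ K₀ + ε / 2 * G t := by
            rw [hGs]
            nlinarith
    obtain ⟨N, hN⟩ := eventually_atTop.1 (hdiv.eventually_ge_atTop (max 1 (2 * (K₀ + 1) / ε)))
    refine ⟨max N T, fun t ht => ?_⟩
    have hGN : max 1 (2 * (K₀ + 1) / ε) ≤ G t := hN t ((le_max_left _ _).trans ht)
    have hGt1 : (1:ℝ) ≤ G t := (le_max_left _ _).trans hGN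
    have hGtB : 2 * (K₀ + 1) / ε ≤ G t := (le_max_right _ _).trans hGN
    have hGpos' : 0 < G t := lt_of_lt_of_le one_pos hGt1
    have hest := est t ((le_max_right N T).trans ht)
    have hK₀lt : K₀ < ε / 2 * G t := by
      have hid : ε / 2 * (2 * (K₀ + 1) / ε) = K₀ + 1 := by
        field_simp
      have := mul_le_mul_of_nonneg_left hGtB hhalf.le
      rw [hid] at this
      linarith
    rw [Real.dist_eq]
    have hrw : Φ t / G t - C = (Φ t - C * G t) / G t := by field_simp
    rw [hrw, abs_div, abs_of_pos hGpos', div_lt_iff₀ hGpos']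
    calc |Φ t - C * G t| ≤ K₀ + ε / 2 * G t := hest
      _ < ε / 2 * G t + ε / 2 * G t := by linarith
      _ = ε * G t := by ring
  simpa only [hEq] using main
end

section
/- Let g : [0,∞) → ℝ be measurable and locally essentially bounded, and suppose there exist τ > 0 and ρ > 0 such that g(t)² > ρ for almost every t ∈ [0, τ]. Let c₁ ≥ c₂ > 0 and define m_t = ∫₀ᵗ c₁ e^{-c₁(t-s)} g(s) ds, v_t = ∫₀ᵗ c₂ e^{-c₂(t-s)} g(s)² ds, and the bias-corrected quantities m̂_t = m_t/(1 - e^{-c₁ t}), v̂_t = v_t/(1 - e^{-c₂ t}). Then the ratio m̂_t/√(v̂_t) is bounded on (0, τ]; in fact |m̂_t/√(v̂_t)| ≤ M/√ρ for all t ∈ (0,τ], where M is the essential supremum of |g| on [0, τ]. -/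
open MeasureTheory Filter

lemma kernel_integral (c t : ℝ) :
    (∫ s in (0:ℝ)..t, c * Real.exp (-c * (t - s))) = 1 - Real.exp (-c * t) := by
  have hderiv : ∀ s ∈ Set.uIcc (0:ℝ) t,
      HasDerivAt (fun s => Real.exp (-c * (t - s))) (c * Real.exp (-c * (t - s))) s := by
    intro s _
    have h1 : HasDerivAt (fun s : ℝ => -c * (t - s)) c s := by
      have : HasDerivAt (fun y : ℝ => -c * (t - id y)) (-c * -1) s :=
        (((hasDerivAt_id s).const_sub t)).const_mul (-c)
      simpa [id] using this
    simpa [mul_comm] using h1.exp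
  have hcont : IntervalIntegrable (fun s => c * Real.exp (-c * (t - s))) volume 0 t :=
    Continuous.intervalIntegrable (by fun_prop) _ _
  have := intervalIntegral.integral_eq_sub_of_hasDerivAt hderiv hcont
  simpa using this

lemma kernel_nonneg (c t s : ℝ) (hc : 0 < c) : 0 ≤ c * Real.exp (-c * (t - s)) := by
  positivity

/-- Adam ratio bounded at initialization. -/
theorem stmt9 (g : ℝ → ℝ) (hgm : Measurable g) (hgb : LocEssBdd g)
    (τ ρ : ℝ) (hτ : 0 < τ) (hρ : 0 < ρ)
    (hg2 : ∀ᵐ t ∂(volume : Measure ℝ), t ∈ Set.Icc (0:ℝ) τ → ρ < (g t) ^ 2)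
    (c₁ c₂ : ℝ) (hc₂ : 0 < c₂) (hc₁₂ : c₂ ≤ c₁) :
    ∀ t ∈ Set.Ioc (0:ℝ) τ,
      |((∫ s in (0:ℝ)..t, c₁ * Real.exp (-c₁ * (t - s)) * g s) / (1 - Real.exp (-c₁ * t)))
        / Real.sqrt ((∫ s in (0:ℝ)..t, c₂ * Real.exp (-c₂ * (t - s)) * (g s) ^ 2)
            / (1 - Real.exp (-c₂ * t)))|
      ≤ (essSup (fun t => |g t|) ((volume : Measure ℝ).restrict (Set.Icc (0:ℝ) τ)))
          / Real.sqrt ρ := by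
  have hc₁ : 0 < c₁ := lt_of_lt_of_le hc₂ hc₁₂
  set M := essSup (fun t => |g t|) ((volume : Measure ℝ).restrict (Set.Icc (0:ℝ) τ)) with hM
  obtain ⟨C, hC⟩ := hgb τ
  have hCr : ∀ᵐ s ∂((volume : Measure ℝ).restrict (Set.Icc (0:ℝ) τ)), |g s| ≤ C :=
    (ae_restrict_iff' measurableSet_Icc).2 hC
  have hbdd : IsBoundedUnder (· ≤ ·) (ae ((volume : Measure ℝ).restrict (Set.Icc (0:ℝ) τ)))
      (fun t => |g t|) := ⟨C, hCr⟩
  have haeM : ∀ᵐ s ∂((volume : Measure ℝ).restrict (Set.Icc (0:ℝ) τ)), |g s| ≤ M :=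
    ae_le_essSup hbdd
  have haeM' : ∀ᵐ s ∂(volume : Measure ℝ), s ∈ Set.Icc (0:ℝ) τ → |g s| ≤ M :=
    (ae_restrict_iff' measurableSet_Icc).1 haeM
  have hM0 : 0 ≤ M := by
    have hne : ((volume : Measure ℝ).restrict (Set.Icc (0:ℝ) τ)) ≠ 0 := by
      intro h
      have h2 : (volume : Measure ℝ) (Set.Icc (0:ℝ) τ) = 0 := by
        rw [← Measure.restrict_apply_univ, h]; simp
      rw [Real.volume_Icc] at h2
      simp only [sub_zero] at h2
      exact absurd h2 (by positivity)
    have : (ae ((volume : Measure ℝ).restrict (Set.Icc (0:ℝ) τ))).NeBot := ae_neBot.2 hne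
    obtain ⟨s, hs⟩ := haeM.exists
    exact le_trans (abs_nonneg _) hs
  intro t ht
  obtain ⟨ht0, htτ⟩ := ht
  have hE₁ : 0 < 1 - Real.exp (-c₁ * t) := by
    have : Real.exp (-c₁ * t) < 1 := Real.exp_lt_one_iff.2 (by nlinarith)
    linarith
  have hE₂ : 0 < 1 - Real.exp (-c₂ * t) := by
    have : Real.exp (-c₂ * t) < 1 := Real.exp_lt_one_iff.2 (by nlinarith)
    linarith
  -- kernel integrability
  have hker_int : ∀ c : ℝ, IntervalIntegrable (fun s => c * Real.exp (-c * (t - s))) volume 0 t :=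
    fun c => Continuous.intervalIntegrable (by fun_prop) _ _
  have hker_intM : ∀ c K : ℝ,
      IntervalIntegrable (fun s => c * Real.exp (-c * (t - s)) * K) volume 0 t :=
    fun c K => Continuous.intervalIntegrable (by fun_prop) _ _
  have hkerM : ∀ c K : ℝ,
      (∫ s in (0:ℝ)..t, c * Real.exp (-c * (t - s)) * K) = (1 - Real.exp (-c * t)) * K := by
    intro c K
    rw [intervalIntegral.integral_mul_const, kernel_integral]
  -- a.e. facts on restrict Ioc 0 t
  have haeC2 : ∀ᵐ s ∂((volume : Measure ℝ).restrict (Set.Ioc (0:ℝ) t)),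
      |g s| ≤ M ∧ ρ < (g s) ^ 2 := by
    refine (ae_restrict_iff' measurableSet_Ioc).2 ?_
    filter_upwards [haeM', hg2] with s h1 h2 hst
    exact ⟨h1 ⟨hst.1.le, hst.2.trans htτ⟩, h2 ⟨hst.1.le, hst.2.trans htτ⟩⟩
  have hexp_le : ∀ s ∈ Set.Ioc (0:ℝ) t, ∀ c : ℝ, 0 < c → Real.exp (-c * (t - s)) ≤ 1 := by
    intro s hs c hc
    apply Real.exp_le_one_iff.2
    nlinarith [hs.2, sub_nonneg.2 hs.2]
  -- integrability of the two integrands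
  have hint1 : IntervalIntegrable (fun s => c₁ * Real.exp (-c₁ * (t - s)) * g s) volume 0 t := by
    rw [intervalIntegrable_iff_integrableOn_Ioc_of_le ht0.le]
    refine Integrable.mono' (g := fun _ => c₁ * M) (integrable_const _)
      (by fun_prop : Measurable fun s => c₁ * Real.exp (-c₁ * (t - s)) * g s).aestronglyMeasurable ?_
    filter_upwards [haeC2, ae_restrict_mem measurableSet_Ioc] with s hs hmem
    have he := hexp_le s hmem c₁ hc₁
    have hke := kernel_nonneg c₁ t s hc₁
    calc ‖c₁ * Real.exp (-c₁ * (t - s)) * g s‖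
        = c₁ * Real.exp (-c₁ * (t - s)) * |g s| := by
          rw [Real.norm_eq_abs, abs_mul, abs_of_nonneg hke]
      _ ≤ c₁ * 1 * M := by
          apply mul_le_mul (by nlinarith) hs.1 (abs_nonneg _) (by positivity)
      _ = c₁ * M := by ring
  have hint2 : IntervalIntegrable (fun s => c₂ * Real.exp (-c₂ * (t - s)) * (g s) ^ 2)
      volume 0 t := by
    rw [intervalIntegrable_iff_integrableOn_Ioc_of_le ht0.le]
    refine Integrable.mono' (g := fun _ => c₂ * (M ^ 2)) (integrable_const _)
      (by fun_prop : Measurable fun s => c₂ * Real.exp (-c₂ * (t - s)) * (g s) ^ 2).aestronglyMeasurable ?_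
    filter_upwards [haeC2, ae_restrict_mem measurableSet_Ioc] with s hs hmem
    have he := hexp_le s hmem c₂ hc₂
    have hke := kernel_nonneg c₂ t s hc₂
    have hsq : (g s) ^ 2 ≤ M ^ 2 := by
      have := sq_abs (g s)
      nlinarith [hs.1, abs_nonneg (g s)]
    calc ‖c₂ * Real.exp (-c₂ * (t - s)) * (g s) ^ 2‖
        = c₂ * Real.exp (-c₂ * (t - s)) * (g s) ^ 2 := by
          rw [Real.norm_eq_abs, abs_of_nonneg (by positivity)]
      _ ≤ c₂ * 1 * M ^ 2 := by
          apply mul_le_mul (by nlinarith) hsq (by positivity) (by positivity)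
      _ = c₂ * M ^ 2 := by ring
  -- numerator bound
  have hnum : |∫ s in (0:ℝ)..t, c₁ * Real.exp (-c₁ * (t - s)) * g s|
      ≤ (1 - Real.exp (-c₁ * t)) * M := by
    have huIoc : Set.uIoc (0:ℝ) t = Set.Ioc 0 t := Set.uIoc_of_le ht0.le
    have h := intervalIntegral.norm_integral_le_abs_of_norm_le
      (f := fun s => c₁ * Real.exp (-c₁ * (t - s)) * g s)
      (g := fun s => c₁ * Real.exp (-c₁ * (t - s)) * M) (μ := volume) (a := 0) (b := t)
      ?_ (hker_intM c₁ M)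
    · rw [Real.norm_eq_abs] at h
      refine h.trans ?_
      rw [hkerM c₁ M, abs_of_nonneg (by positivity)]
    · rw [huIoc]
      filter_upwards [haeC2] with s hs
      have hke := kernel_nonneg c₁ t s hc₁
      rw [Real.norm_eq_abs, abs_mul, abs_of_nonneg hke]
      exact mul_le_mul_of_nonneg_left hs.1 hke
  -- denominator lower bound
  have hden : (1 - Real.exp (-c₂ * t)) * ρ
      ≤ ∫ s in (0:ℝ)..t, c₂ * Real.exp (-c₂ * (t - s)) * (g s) ^ 2 := by
    rw [← hkerM c₂ ρ]
    refine intervalIntegral.integral_mono_ae_restrict ht0.le (hker_intM c₂ ρ) hint2 ?_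
    have : ∀ᵐ s ∂((volume : Measure ℝ).restrict (Set.Icc (0:ℝ) t)), ρ < (g s) ^ 2 := by
      refine (ae_restrict_iff' measurableSet_Icc).2 ?_
      filter_upwards [hg2] with s h2 hst
      exact h2 ⟨hst.1, hst.2.trans htτ⟩
    filter_upwards [this] with s hs
    exact mul_le_mul_of_nonneg_left hs.le (kernel_nonneg c₂ t s hc₂)
  -- put it together
  set m := ∫ s in (0:ℝ)..t, c₁ * Real.exp (-c₁ * (t - s)) * g s
  set v := ∫ s in (0:ℝ)..t, c₂ * Real.exp (-c₂ * (t - s)) * (g s) ^ 2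
  have hmhat : |m / (1 - Real.exp (-c₁ * t))| ≤ M := by
    rw [abs_div, abs_of_pos hE₁, div_le_iff₀ hE₁]
    linarith [hnum]
  have hvhat : ρ ≤ v / (1 - Real.exp (-c₂ * t)) := by
    rw [le_div_iff₀ hE₂]
    linarith [hden]
  have hsq : Real.sqrt ρ ≤ Real.sqrt (v / (1 - Real.exp (-c₂ * t))) :=
    Real.sqrt_le_sqrt hvhat
  have hsρ : 0 < Real.sqrt ρ := Real.sqrt_pos.2 hρ
  rw [abs_div, abs_of_nonneg (Real.sqrt_nonneg _)]
  exact div_le_div₀ hM0 hmhat hsρ hsq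
end
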